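/- Let a be a self-modified ascent sequence with corresponding Fishburn matrix M ∈ RMatrices. Then the dual ascent sequence a* (defined as f_MA applied to the antidiagonal reflection of M) equals the panorama pan(a). -/

import Mathlib

def ascents (l : List ℕ) : ℕ :=
  ((l.zip l.tail).filter (fun p => p.1 < p.2)).length

def IsAscSeq (l : List ℕ) : Prop :=
  l.getD 0 0 = 0 ∧
  ∀ k, k < l.length → 0 < k → l.getD k 0 ≤ ascents (l.take k) + 1

def IsRGF (l : List ℕ) : Prop :=
  l.getD 0 0 = 0 ∧
  ∀ k, k < l.length → ∀ j, l.getD k 0 = j + 1 → ∃ i, i < k ∧ l.getD i 0 = j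

def SelfModified (l : List ℕ) : Prop :=
  IsAscSeq l ∧
  ∀ k, k < l.length → 0 < k →
    l.getD k 0 ≤ l.getD (k - 1) 0 ∨ l.getD k 0 = ascents (l.take k) + 1

def Contains101 (l : List ℕ) : Prop :=
  ∃ i j k, i < j ∧ j < k ∧ k < l.length ∧
    l.getD i 0 = l.getD k 0 ∧ l.getD j 0 < l.getD k 0

def Contains0101 (l : List ℕ) : Prop :=
  ∃ i j k m, i < j ∧ j < k ∧ k < m ∧ m < l.length ∧
    l.getD i 0 = l.getD k 0 ∧ l.getD j 0 = l.getD m 0 ∧ l.getD i 0 < l.getD j 0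

def Contains1010 (l : List ℕ) : Prop :=
  ∃ i j k m, i < j ∧ j < k ∧ k < m ∧ m < l.length ∧
    l.getD i 0 = l.getD k 0 ∧ l.getD j 0 = l.getD m 0 ∧ l.getD j 0 < l.getD i 0

/-- The view of position `i` in the sequence `a`: the number of indices `j > i` such
that `a j` strictly exceeds all entries `a k` for `i ≤ k < j`.  This agrees with the
recursive definition `v i = v j + 1` for `j` the least index `> i` with `a j > a i`. -/
def view {α : Type*} [LinearOrder α] [Inhabited α] (a : List α) (i : ℕ) : ℕ :=
  ((List.range a.length).filter (fun j =>
    decide (i < j ∧ ∀ k, k < j → i ≤ k → a.getD k default < a.getD j default))).length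

/-- The panorama of `a`: the views of the positions of `a`, listed grouped by entry
value from largest value to smallest, positions within a group in increasing order. -/
def pan {α : Type*} [LinearOrder α] [Inhabited α] (a : List α) : List ℕ :=
  ((List.range a.length).mergeSort (fun i j =>
    decide (a.getD j default < a.getD i default ∨
      (a.getD i default = a.getD j default ∧ i ≤ j)))).map (view a)

/-- A square matrix of natural numbers, given by a dimension and an entry function
(indices are 0-based; entries with an index `≥ d` are irrelevant/zero). -/
structure FMat where
  d : ℕ
  entry : ℕ → ℕ → ℕ

/-- 0-based index of the first row whose rightmost entry is nonzero. -/
noncomputable def mindex (M : FMat) : ℕ :=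
  sInf {i | M.entry i (M.d - 1) ≠ 0}

/-- One step of the recursive bijection from ascent sequences to Fishburn matrices,
with cases AM1, AM2, AM3 (0-based indices). -/
noncomputable def fStep (M : FMat) (a : ℕ) : FMat :=
  if a ≤ mindex M then
    -- AM1: increase entry (a, d-1)
    ⟨M.d, fun i j => M.entry i j + if i = a ∧ j = M.d - 1 then 1 else 0⟩
  else if a = M.d then
    -- AM2: append a new row and column, with 1 in the new diagonal entry
    ⟨M.d + 1, fun i j =>
      if i = M.d ∨ j = M.d then (if i = M.d ∧ j = M.d then 1 else 0)
      else M.entry i j⟩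
  else
    -- AM3: insert a new row and column at index a
    ⟨M.d + 1, fun i j =>
      if i = a then (if j = M.d then 1 else 0)
      else if j = a then (if i < a then M.entry i (M.d - 1) else 0)
      else if j = M.d ∧ i < a then 0
      else M.entry (if i < a then i else i - 1) (if j < a then j else j - 1)⟩

/-- The map from ascent sequences to Fishburn matrices. -/
noncomputable def fAM (l : List ℕ) : FMat :=
  l.tail.foldl fStep ⟨1, fun i j => if i = 0 ∧ j = 0 then 1 else 0⟩

/-- Fishburn matrix: upper triangular (and supported on `[0,d) × [0,d)`),
with no zero row and no zero column. -/
def IsFishburn (M : FMat) : Prop :=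
  (∀ i j, (M.d ≤ i ∨ M.d ≤ j ∨ j < i) → M.entry i j = 0) ∧
  (∀ i, i < M.d → ∃ j, j < M.d ∧ M.entry i j ≠ 0) ∧
  (∀ j, j < M.d → ∃ i, i < M.d ∧ M.entry i j ≠ 0)

def entrySum (M : FMat) : ℕ :=
  ∑ i ∈ Finset.range M.d, ∑ j ∈ Finset.range M.d, M.entry i j

/-- Reflection of a matrix through its antidiagonal. -/
def reflect (M : FMat) : FMat :=
  ⟨M.d, fun i j => if i < M.d ∧ j < M.d then M.entry (M.d - 1 - j) (M.d - 1 - i) else 0⟩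

/-- The canonical sequence `(0^{m₀₀}, 1^{m₁₁}, 0^{m₀₁}, 2^{m₂₂}, 1^{m₁₂}, 0^{m₀₂}, …)`
(0-based indices) associated to a matrix; this is `f_MA(M)` for `M ∈ RMatrices`. -/
def canonSeq (M : FMat) : List ℕ :=
  (List.range M.d).flatMap (fun j =>
    (List.range (j + 1)).reverse.flatMap (fun i => List.replicate (M.entry i j) i))

/-- The dual canonical sequence
`(0^{m_{d-1,d-1}}, 1^{m_{d-2,d-2}}, 0^{m_{d-2,d-1}}, …, (d-1)^{m_{0,0}}, …, 0^{m_{0,d-1}})`,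
i.e. `f_MA` applied to the antidiagonal reflection of `M`. -/
def dualCanonSeq (M : FMat) : List ℕ :=
  (List.range M.d).flatMap (fun j =>
    (List.range (j + 1)).reverse.flatMap (fun i =>
      List.replicate (M.entry (M.d - 1 - j) (M.d - 1 - i)) i))

/-- A matrix is SE-free if it has no pair of nonzero entries `m i j`, `m i' j'`
with `i < i'`, `j < j'` and `i' ≤ j`. -/
def SEFree (M : FMat) : Prop :=
  ¬ ∃ i j i' j', i < i' ∧ j < j' ∧ i' ≤ j ∧ j' < M.d ∧
    M.entry i j ≠ 0 ∧ M.entry i' j' ≠ 0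

/-- Generalized ballot sequence (Yamanouchi word): in every prefix, each value `j+1`
occurs at most as often as `j`. -/
def IsBallot (l : List ℕ) : Prop :=
  ∀ k j, (l.take k).count (j + 1) ≤ (l.take k).count j


/-!
For a self-modified ascent sequence `a`, the construction `fAM` only uses the cases AM1 (raise an
entry of the last column) and AM2 (add a new diagonal corner): `mindex (fAM a)` is always the last
letter of `a`, so AM1 applies exactly at weak descents, and at a strict ascent self-modification
forces the new letter to be `ascents + 1 = d`. Each such step appends the new letter to
`canonSeq`, hence `a = canonSeq (fAM a)`.

In `canonSeq M` the block of column `c` starts with its diagonal letter `c` and then weakly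
decreases, so the records to the right of a position in block `c` are exactly the starts of the
later blocks, and that position has view `d - 1 - c`. Listing the positions by value `v` from
`d - 1` down to `0` therefore produces, for each `v`, the letters `d - 1 - c` with multiplicity
`m_{vc}` for `c = v, …, d - 1`: this is the dual canonical sequence.
-/

open List

theorem range_eq_range_append_range' {m n : ℕ} (h : m ≤ n) :
    range n = range m ++ range' m (n - m) := by
  have := range_add (n := m) (m := n - m)
  rwa [← range'_eq_map_range, Nat.add_sub_cancel' h] at this

theorem reverse_range_eq_map (n : ℕ) : (range n).reverse = (range n).map (n - 1 - ·) := by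
  conv_lhs => rw [range_eq_range']
  rw [reverse_range', Nat.zero_add]

def descWord (f : ℕ → ℕ) (n : ℕ) : List ℕ :=
  (range n).reverse.flatMap fun i => replicate (f i) i

section descWord

variable {f g : ℕ → ℕ} {n x : ℕ}

theorem descWord_succ (f : ℕ → ℕ) (n : ℕ) :
    descWord f (n + 1) = replicate (f n) n ++ descWord f n := by
  simp [descWord, range_succ]

theorem descWord_congr (h : ∀ i < n, f i = g i) : descWord f n = descWord g n :=
  flatMap_congr fun i hi => by rw [h i (by simpa using hi)]

theorem descWord_eq_nil (h : ∀ i < n, f i = 0) : descWord f n = [] := by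
  simp only [descWord, flatMap_eq_nil_iff, mem_reverse, mem_range, replicate_eq_nil_iff]
  exact h

theorem count_descWord (f : ℕ → ℕ) (n v : ℕ) :
    (descWord f n).count v = if v < n then f v else 0 := by
  induction n with
  | zero => simp [descWord]
  | succ n ih =>
    rw [descWord_succ, count_append, ih, count_replicate]
    rcases Nat.lt_trichotomy v n with h | rfl | h
    · simp [h, h.ne', Nat.lt_succ_of_lt h]
    · simp
    · simp [h.ne, h.not_gt, show ¬ v < n + 1 by omega]

theorem lt_of_mem_descWord (h : x ∈ descWord f n) : x < n := by
  simp only [descWord, mem_flatMap, mem_reverse, mem_range] at h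
  obtain ⟨i, hi, hx⟩ := h
  rwa [eq_of_mem_replicate hx]

theorem pairwise_ge_descWord (f : ℕ → ℕ) (n : ℕ) :
    (descWord f n).Pairwise (fun x y => y ≤ x) := by
  induction n with
  | zero => simp [descWord]
  | succ n ih =>
    rw [descWord_succ, pairwise_append]
    refine ⟨pairwise_replicate.2 (Or.inr le_rfl), ih, fun a ha b hb => ?_⟩
    rw [eq_of_mem_replicate ha]
    exact (lt_of_mem_descWord hb).le

theorem head_descWord (hf : f n ≠ 0) : (descWord f (n + 1)).getD 0 0 = n := by
  obtain ⟨m, hm⟩ := Nat.exists_eq_succ_of_ne_zero hf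
  rw [descWord_succ, hm, replicate_succ]
  rfl

theorem descWord_add_single (hx : x < n) (h0 : ∀ i < x, f i = 0) :
    descWord (fun i => f i + if i = x then 1 else 0) n = descWord f n ++ [x] := by
  induction n with
  | zero => omega
  | succ n ih =>
    rcases Nat.lt_or_ge x n with h | h
    · rw [descWord_succ, descWord_succ, ih h, if_neg (by omega), append_assoc]
      rfl
    · obtain rfl : x = n := by omega
      have h0' : ∀ i < x, f i + (if i = x then 1 else 0) = 0 := fun i hi => by
        rw [h0 i hi, if_neg hi.ne]
      rw [descWord_succ, descWord_succ, if_pos rfl, descWord_eq_nil h0, descWord_eq_nil h0',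
        replicate_succ']
      simp

end descWord

def positionsOf (a : List ℕ) (v : ℕ) : List ℕ :=
  (range a.length).filter fun i => a.getD i 0 = v

theorem length_positionsOf (a : List ℕ) (v : ℕ) : (positionsOf a v).length = a.count v := by
  have ha : (range a.length).map (fun i => a.getD i 0) = a :=
    ext_getElem (by simp) fun i _ h => by simp [h]
  conv_rhs => rw [← ha]
  rw [count_eq_countP, countP_map, countP_eq_length_filter, positionsOf]
  congr 1

theorem perm_flatMap_positionsOf {a s : List ℕ} (hs : s.Nodup) (ha : ∀ x ∈ a, x ∈ s) :
    (s.flatMap (positionsOf a)).Perm (range a.length) := by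
  have hget : ∀ i < a.length, a.getD i 0 ∈ s := fun i hi => by
    rw [getD_eq_getElem _ _ hi]; exact ha _ (getElem_mem hi)
  refine (perm_ext_iff_of_nodup ?_ nodup_range).2 fun i => ?_
  · refine nodup_flatMap.2 ⟨fun v _ => nodup_range.filter _, hs.imp fun hne => ?_⟩
    intro i hv hw
    simp only [positionsOf, mem_filter, decide_eq_true_eq] at hv hw
    exact hne (hv.2.symm.trans hw.2)
  · simp only [mem_flatMap, positionsOf, mem_filter, mem_range, decide_eq_true_eq]
    exact ⟨fun ⟨_, _, hi, _⟩ => hi, fun hi => ⟨_, hget i hi, hi, rfl⟩⟩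

theorem mergeSort_range_eq_flatMap_positionsOf {a : List ℕ} {d : ℕ} (ha : ∀ x ∈ a, x < d) :
    (range a.length).mergeSort (fun i j => decide (a.getD j default < a.getD i default ∨
      (a.getD i default = a.getD j default ∧ i ≤ j))) =
      (range d).reverse.flatMap (positionsOf a) := by
  have hperm := perm_flatMap_positionsOf (s := (range d).reverse) (nodup_reverse.2 nodup_range)
    (by simpa using ha)
  refine Perm.eq_of_pairwise (fun i j _ _ hij hji => ?_)
    (pairwise_mergeSort (fun i j k hij hjk => ?_) (fun i j => ?_) _) ?_
    ((mergeSort_perm _ _).trans hperm.symm)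
  · simp only [decide_eq_true_eq] at hij hji
    omega
  · simp only [decide_eq_true_eq] at hij hjk ⊢
    omega
  · simp only [Bool.or_eq_true, decide_eq_true_eq]
    omega
  · refine pairwise_flatMap.2 ⟨fun v _ => ?_, ?_⟩
    · refine (pairwise_lt_range.filter _).imp_of_mem fun hi hj hij => ?_
      simp only [positionsOf, mem_filter, decide_eq_true_eq] at hi hj
      simp only [decide_eq_true_eq]
      exact Or.inr ⟨hi.2.trans hj.2.symm, hij.le⟩
    · refine pairwise_reverse.2 (pairwise_lt_range.imp fun hvw i hi j hj => ?_)
      simp only [positionsOf, mem_filter, decide_eq_true_eq] at hi hj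
      simp only [decide_eq_true_eq]
      exact Or.inl (by rw [← hi.2, ← hj.2] at hvw; exact hvw)

theorem pan_eq_flatMap {a : List ℕ} {d : ℕ} (ha : ∀ x ∈ a, x < d) :
    pan a = (range d).reverse.flatMap fun v => (positionsOf a v).map (view a) := by
  rw [pan, mergeSort_range_eq_flatMap_positionsOf ha, map_flatMap]

abbrev IsRecordAfter (a : List ℕ) (i j : ℕ) : Prop :=
  i < j ∧ ∀ k, k < j → i ≤ k → a.getD k 0 < a.getD j 0

theorem view_eq_length_filter (a : List ℕ) (i : ℕ) :
    view a i = ((range a.length).filter fun j => IsRecordAfter a i j).length := rfl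

theorem ascents_cons_cons (a b : ℕ) (t : List ℕ) :
    ascents (a :: b :: t) = (if a < b then 1 else 0) + ascents (b :: t) := by
  by_cases h : a < b
  · simp [ascents, h]
    omega
  · simp [ascents, h]

theorem ascents_concat {l : List ℕ} (hl : l ≠ []) (x : ℕ) :
    ascents (l ++ [x]) = ascents l + if l.getD (l.length - 1) 0 < x then 1 else 0 := by
  induction l with
  | nil => exact absurd rfl hl
  | cons a l ih =>
    rcases l with _ | ⟨b, t⟩
    · by_cases h : a < x <;> simp [ascents, h]
    · rw [cons_append, cons_append, ascents_cons_cons, ascents_cons_cons, ← cons_append,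
        ih (cons_ne_nil b t)]
      simp only [length_cons, Nat.add_sub_cancel, getD_cons_succ]
      omega

theorem SelfModified.of_append {l r : List ℕ} (h : SelfModified (l ++ r)) : SelfModified l := by
  obtain ⟨⟨h0, hasc⟩, hsm⟩ := h
  have hget : ∀ k < l.length, (l ++ r).getD k 0 = l.getD k 0 := fun k hk =>
    getD_append _ _ _ _ hk
  have htake : ∀ k ≤ l.length, (l ++ r).take k = l.take k := fun k hk =>
    take_append_of_le_length hk
  refine ⟨⟨?_, fun k hk hk0 => ?_⟩, fun k hk hk0 => ?_⟩
  · rcases l with _ | ⟨a, l⟩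
    · rfl
    · rwa [hget 0 (by simp)] at h0
  · have := hasc k (by rw [length_append]; omega) hk0
    rwa [hget k hk, htake k hk.le] at this
  · have := hsm k (by rw [length_append]; omega) hk0
    rwa [hget k hk, hget (k - 1) (by omega), htake k hk.le] at this

theorem SelfModified.concat_le_or_eq {l : List ℕ} {x : ℕ} (h : SelfModified (l ++ [x]))
    (hl : l ≠ []) : x ≤ l.getD (l.length - 1) 0 ∨ x = ascents l + 1 := by
  have hpos := length_pos_iff.2 hl
  have := h.2 l.length (by simp) hpos
  rwa [getD_append_right _ _ _ _ le_rfl, Nat.sub_self, getD_append _ _ _ _ (by omega),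
    take_append_of_le_length le_rfl, take_length] at this

namespace FMat

/-- The class `RMatrices`; positivity of the diagonal rules out zero rows and columns. -/
structure IsRMatrix (M : FMat) : Prop where
  d_pos : 0 < M.d
  entry_eq_zero : ∀ i j, (M.d ≤ i ∨ M.d ≤ j ∨ j < i) → M.entry i j = 0
  diag_pos : ∀ i < M.d, 0 < M.entry i i

def block (M : FMat) (j : ℕ) : List ℕ :=
  descWord (fun i => M.entry i j) (j + 1)

def blockStart (M : FMat) (c : ℕ) : ℕ :=
  ((range c).flatMap M.block).length

variable {M N : FMat} {c c' i j k n t v x : ℕ}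

theorem canonSeq_eq_flatMap_block (M : FMat) : canonSeq M = (range M.d).flatMap M.block := rfl

theorem block_congr (h : ∀ i ≤ j, M.entry i j = N.entry i j) : M.block j = N.block j :=
  descWord_congr fun i hi => h i (Nat.le_of_lt_succ hi)

theorem le_of_mem_block (h : x ∈ M.block j) : x ≤ j :=
  Nat.le_of_lt_succ (lt_of_mem_descWord h)

theorem pairwise_ge_block (M : FMat) (j : ℕ) : (M.block j).Pairwise (fun x y => y ≤ x) :=
  pairwise_ge_descWord _ _

theorem IsRMatrix.head_block (hM : M.IsRMatrix) (hj : j < M.d) : (M.block j).getD 0 0 = j :=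
  head_descWord (hM.diag_pos j hj).ne'

theorem IsRMatrix.length_block_pos (hM : M.IsRMatrix) (hj : j < M.d) :
    0 < (M.block j).length := by
  have := count_descWord (fun i => M.entry i j) (j + 1) j
  rw [if_pos j.lt_succ_self] at this
  exact (hM.diag_pos j hj).trans_le (this ▸ count_le_length)

theorem IsRMatrix.count_block (hM : M.IsRMatrix) :
    (M.block j).count v = M.entry v j := by
  rw [block, count_descWord]
  split_ifs with h
  · rfl
  · exact (hM.entry_eq_zero v j (by omega)).symm

theorem lt_of_mem_canonSeq (h : x ∈ canonSeq M) : x < M.d := by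
  obtain ⟨j, hj, hx⟩ := mem_flatMap.1 h
  exact (le_of_mem_block hx).trans_lt (mem_range.1 hj)

theorem blockStart_succ (M : FMat) (c : ℕ) :
    M.blockStart (c + 1) = M.blockStart c + (M.block c).length := by
  simp [blockStart, range_succ]

theorem blockStart_mono (M : FMat) : Monotone M.blockStart :=
  monotone_nat_of_le_succ fun c => by rw [blockStart_succ]; omega

theorem length_canonSeq (M : FMat) : (canonSeq M).length = M.blockStart M.d := rfl

theorem range_blockStart (M : FMat) (c : ℕ) :
    range (M.blockStart c) =
      (range c).flatMap fun c' => range' (M.blockStart c') (M.block c').length := by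
  induction c with
  | zero => rfl
  | succ c ih =>
    rw [range_succ, flatMap_append, ← ih, flatMap_singleton, blockStart_succ,
      range_eq_range_append_range' (Nat.le_add_right _ _), Nat.add_sub_cancel_left]

theorem canonSeq_eq_append (hc : c ≤ M.d) :
    canonSeq M = (range c).flatMap M.block ++ (range' c (M.d - c)).flatMap M.block := by
  rw [canonSeq_eq_flatMap_block, range_eq_range_append_range' hc, flatMap_append]

theorem getD_canonSeq_lt (hc : c ≤ M.d) (hk : k < M.blockStart c) :
    (canonSeq M).getD k 0 < c := by
  rw [canonSeq_eq_append hc, getD_append _ _ _ _ hk, getD_eq_getElem _ _ hk]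
  obtain ⟨j, hj, hx⟩ := mem_flatMap.1 (getElem_mem hk)
  exact (le_of_mem_block hx).trans_lt (mem_range.1 hj)

theorem getD_canonSeq_blockStart_add (hc : c < M.d) (ht : t < (M.block c).length) :
    (canonSeq M).getD (M.blockStart c + t) 0 = (M.block c).getD t 0 := by
  obtain ⟨n, hn⟩ : ∃ n, M.d - c = n + 1 := ⟨M.d - c - 1, by omega⟩
  rw [canonSeq_eq_append hc.le, hn, range'_succ, flatMap_cons, blockStart,
    getD_append_right _ _ _ _ (Nat.le_add_right _ _), Nat.add_sub_cancel_left,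
    getD_append _ _ _ _ ht]

theorem IsRMatrix.getD_canonSeq_blockStart (hM : M.IsRMatrix) (hc : c < M.d) :
    (canonSeq M).getD (M.blockStart c) 0 = c := by
  have := getD_canonSeq_blockStart_add hc (hM.length_block_pos hc)
  rwa [Nat.add_zero, hM.head_block hc] at this

theorem antitoneOn_getD_canonSeq (hc : c < M.d) :
    AntitoneOn (fun k => (canonSeq M).getD k 0)
      (Set.Ico (M.blockStart c) (M.blockStart (c + 1))) := by
  rintro k ⟨hk, -⟩ k' ⟨hk', hk'c⟩ hkk'
  rw [blockStart_succ] at hk'c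
  have ht : k - M.blockStart c < (M.block c).length := by omega
  have ht' : k' - M.blockStart c < (M.block c).length := by omega
  simp only
  rw [← Nat.add_sub_cancel' hk, ← Nat.add_sub_cancel' hk', getD_canonSeq_blockStart_add hc ht,
    getD_canonSeq_blockStart_add hc ht', getD_eq_getElem _ _ ht, getD_eq_getElem _ _ ht']
  rcases (Nat.sub_le_sub_right hkk' (M.blockStart c)).eq_or_lt with h | h
  · simp only [h, le_refl]
  · exact pairwise_iff_getElem.1 (pairwise_ge_block M c) _ _ ht ht' h

theorem IsRMatrix.filter_isRecordAfter_block (hM : M.IsRMatrix) (hc' : c' < M.d)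
    (hi : i ∈ Set.Ico (M.blockStart c) (M.blockStart (c + 1))) :
    (range' (M.blockStart c') (M.block c').length).filter
        (fun j => IsRecordAfter (canonSeq M) i j) =
      if c < c' then [M.blockStart c'] else [] := by
  have hlen := hM.length_block_pos hc'
  have hend := blockStart_succ M c'
  -- inside a block the entries weakly decrease, so only a block start can be a record
  have interior : ∀ j ∈ range' (M.blockStart c' + 1) ((M.block c').length - 1),
      ¬ IsRecordAfter (canonSeq M) i j := by
    rintro j hj ⟨hij, hrec⟩
    rw [mem_range'_1] at hj
    have := antitoneOn_getD_canonSeq hc' ⟨(by omega : M.blockStart c' ≤ j - 1), by omega⟩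
      ⟨by omega, by omega⟩ (Nat.sub_le j 1)
    exact (hrec (j - 1) (by omega) (by omega)).not_ge this
  obtain ⟨n, hn⟩ := Nat.exists_eq_add_one_of_ne_zero hlen.ne'
  rw [hn, range'_succ, filter_cons, filter_eq_nil_iff.2 fun j hj => by
    simpa using interior j (by rwa [hn, Nat.add_sub_cancel])]
  by_cases hcc : c < c'
  · have hrec : IsRecordAfter (canonSeq M) i (M.blockStart c') := by
      refine ⟨hi.2.trans_le (M.blockStart_mono hcc), fun k hk _ => ?_⟩
      rw [hM.getD_canonSeq_blockStart hc']
      exact getD_canonSeq_lt hc'.le hk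
    rw [if_pos (decide_eq_true hrec), if_pos hcc]
  · have : ¬ i < M.blockStart c' := not_lt.2 ((M.blockStart_mono (not_lt.1 hcc)).trans hi.1)
    rw [if_neg fun h => this (of_decide_eq_true h).1, if_neg hcc]

theorem IsRMatrix.view_canonSeq (hM : M.IsRMatrix) (hc : c < M.d)
    (hi : i ∈ Set.Ico (M.blockStart c) (M.blockStart (c + 1))) :
    view (canonSeq M) i = M.d - 1 - c := by
  rw [view_eq_length_filter, length_canonSeq, range_blockStart, filter_flatMap,
    flatMap_congr fun c' hc' => hM.filter_isRecordAfter_block (mem_range.1 hc') hi,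
    range_eq_range_append_range' (Nat.succ_le_of_lt hc), flatMap_append,
    flatMap_eq_nil_iff.2 fun c' hc' => if_neg (by simp at hc'; omega), nil_append,
    flatMap_congr fun c' hc' => if_pos (by simp at hc'; omega), ← map_eq_flatMap,
    length_map, length_range']
  omega

theorem IsRMatrix.map_view_positionsOf_canonSeq (hM : M.IsRMatrix) (v : ℕ) :
    (positionsOf (canonSeq M) v).map (view (canonSeq M)) =
      (range M.d).flatMap fun c => replicate (M.entry v c) (M.d - 1 - c) := by
  rw [positionsOf, length_canonSeq, range_blockStart, filter_flatMap, map_flatMap]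
  refine flatMap_congr fun c hc => ?_
  rw [mem_range] at hc
  have hview : ∀ i ∈ (range' (M.blockStart c) (M.block c).length).filter
      (fun i => (canonSeq M).getD i 0 = v), view (canonSeq M) i = M.d - 1 - c := by
    intro i hi
    have hi' := mem_range'_1.1 (mem_of_mem_filter hi)
    rw [← blockStart_succ] at hi'
    exact hM.view_canonSeq hc hi'
  rw [map_congr_left hview, map_const', range'_eq_map_range, filter_map, length_map,
    ← hM.count_block, ← length_positionsOf, positionsOf]
  congr 2
  exact filter_congr fun t ht => by
    rw [Function.comp_apply, getD_canonSeq_blockStart_add hc (mem_range.1 ht)]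

theorem IsRMatrix.dualCanonSeq_eq_flatMap (hM : M.IsRMatrix) :
    dualCanonSeq M = (range M.d).reverse.flatMap fun v =>
      (range M.d).flatMap fun c => replicate (M.entry v c) (M.d - 1 - c) := by
  rw [dualCanonSeq, reverse_range_eq_map, flatMap_map]
  refine flatMap_congr fun j hj => ?_
  rw [mem_range] at hj
  have hleft : (range (M.d - 1 - j)).flatMap
      (fun c => replicate (M.entry (M.d - 1 - j) c) (M.d - 1 - c)) = [] :=
    flatMap_eq_nil_iff.2 fun c hc => by
      rw [hM.entry_eq_zero _ c (by simp at hc; omega), replicate_zero]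
  rw [range_eq_range_append_range' (show M.d - 1 - j ≤ M.d by omega), flatMap_append, hleft,
    nil_append, show M.d - (M.d - 1 - j) = j + 1 by omega, range'_eq_map_range,
    reverse_range_eq_map, flatMap_map, flatMap_map, Nat.add_sub_cancel]
  refine flatMap_congr fun t ht => ?_
  rw [mem_range] at ht
  rw [show M.d - 1 - (j - t) = M.d - 1 - j + t by omega,
    show j - t = M.d - 1 - (M.d - 1 - j + t) by omega]

theorem IsRMatrix.pan_canonSeq (hM : M.IsRMatrix) : pan (canonSeq M) = dualCanonSeq M := by
  rw [pan_eq_flatMap fun _ => lt_of_mem_canonSeq, hM.dualCanonSeq_eq_flatMap]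
  exact flatMap_congr fun v _ => hM.map_view_positionsOf_canonSeq v

def incLastCol (M : FMat) (x : ℕ) : FMat :=
  ⟨M.d, fun i j => M.entry i j + if i = x ∧ j = M.d - 1 then 1 else 0⟩

def addCorner (M : FMat) : FMat :=
  ⟨M.d + 1, fun i j =>
    if i = M.d ∨ j = M.d then (if i = M.d ∧ j = M.d then 1 else 0) else M.entry i j⟩

theorem mindex_eq_of (hx : M.entry x (M.d - 1) ≠ 0)
    (hlow : ∀ i < x, M.entry i (M.d - 1) = 0) : mindex M = x :=
  le_antisymm (Nat.sInf_le hx) (le_csInf ⟨x, hx⟩ fun _ hb => not_lt.1 fun hlt => hb (hlow _ hlt))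

theorem entry_eq_zero_of_lt_mindex (hi : i < mindex M) : M.entry i (M.d - 1) = 0 :=
  not_not.1 (Nat.notMem_of_lt_sInf hi)

theorem IsRMatrix.mindex_lt (hM : M.IsRMatrix) : mindex M < M.d :=
  (Nat.sInf_le (hM.diag_pos (M.d - 1) (by have := hM.d_pos; omega)).ne').trans_lt
    (by have := hM.d_pos; omega)

theorem fStep_of_le_mindex (hx : x ≤ mindex M) : fStep M x = M.incLastCol x :=
  if_pos hx

theorem fStep_d (hM : M.IsRMatrix) : fStep M M.d = M.addCorner := by
  rw [fStep, if_neg hM.mindex_lt.not_ge, if_pos rfl]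
  rfl

theorem canonSeq_eq_append_block (h : M.d = n + 1) :
    canonSeq M = (range n).flatMap M.block ++ M.block n := by
  rw [canonSeq_eq_flatMap_block, h, range_succ, flatMap_append, flatMap_singleton]

theorem IsRMatrix.incLastCol (hM : M.IsRMatrix) (hx : x < M.d) :
    (M.incLastCol x).IsRMatrix where
  d_pos := hM.d_pos
  entry_eq_zero i j hij := by
    simp only [FMat.incLastCol] at hij ⊢
    rw [hM.entry_eq_zero i j hij, if_neg (by omega)]
  diag_pos i hi := Nat.lt_add_right _ (hM.diag_pos i hi)

theorem canonSeq_incLastCol (hx : x ≤ mindex M) (hxd : x < M.d) :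
    canonSeq (M.incLastCol x) = canonSeq M ++ [x] := by
  obtain ⟨n, hn⟩ : ∃ n, M.d = n + 1 := ⟨M.d - 1, by omega⟩
  rw [canonSeq_eq_append_block (M := M.incLastCol x) hn, canonSeq_eq_append_block hn,
    append_assoc]
  congr 1
  · refine flatMap_congr fun j hj => block_congr fun i _ => ?_
    simp only [FMat.incLastCol, mem_range] at hj ⊢
    rw [if_neg (by omega), Nat.add_zero]
  · rw [block, block, ← descWord_add_single (by omega) fun i hi => by
      simpa [hn] using entry_eq_zero_of_lt_mindex (hi.trans_le hx)]
    refine descWord_congr fun i _ => ?_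
    simp [FMat.incLastCol, hn]

theorem mindex_incLastCol (hx : x ≤ mindex M) : mindex (M.incLastCol x) = x := by
  refine mindex_eq_of (by simp [FMat.incLastCol]) fun i hi => ?_
  simp only [FMat.incLastCol]
  rw [entry_eq_zero_of_lt_mindex (hi.trans_le hx), if_neg (by omega)]

theorem IsRMatrix.addCorner (hM : M.IsRMatrix) : M.addCorner.IsRMatrix where
  d_pos := Nat.succ_pos _
  entry_eq_zero i j hij := by
    simp only [FMat.addCorner] at hij ⊢
    split_ifs with h h' <;> first | omega | exact hM.entry_eq_zero i j (by omega)
  diag_pos i hi := by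
    simp only [FMat.addCorner] at hi ⊢
    split_ifs with h h' <;> first | omega | exact hM.diag_pos i (by omega)

theorem canonSeq_addCorner (M : FMat) : canonSeq M.addCorner = canonSeq M ++ [M.d] := by
  rw [canonSeq_eq_append_block (M := M.addCorner) rfl, canonSeq_eq_flatMap_block]
  congr 1
  · refine flatMap_congr fun j hj => block_congr fun i hij => ?_
    simp only [FMat.addCorner, mem_range] at hj ⊢
    rw [if_neg (by omega)]
  · rw [block, descWord_succ, descWord_eq_nil fun i hi => by simp [FMat.addCorner, hi.ne]]
    simp [FMat.addCorner]

theorem mindex_addCorner (M : FMat) : mindex M.addCorner = M.d :=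
  mindex_eq_of (by simp [FMat.addCorner]) fun i hi => by simp [FMat.addCorner, hi.ne]

end FMat

structure AMInvariant (a : List ℕ) (M : FMat) : Prop where
  isRMatrix : M.IsRMatrix
  canonSeq_eq : canonSeq M = a
  d_eq : M.d = ascents a + 1
  mindex_eq : mindex M = a.getD (a.length - 1) 0

namespace AMInvariant

variable {l : List ℕ} {M : FMat} {x : ℕ}

theorem singleton_zero : AMInvariant [0] (fAM [0]) := by
  change AMInvariant [0] ⟨1, fun i j => if i = 0 ∧ j = 0 then 1 else 0⟩
  refine ⟨⟨Nat.one_pos, fun i j hij => if_neg ?_, fun i hi => ?_⟩, rfl, rfl, ?_⟩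
  · simp only at hij
    omega
  · obtain rfl : i = 0 := Nat.lt_one_iff.1 hi
    simp
  · exact FMat.mindex_eq_of (by simp) fun _ hi => absurd hi (Nat.not_lt_zero _)

theorem concat_of_le (h : AMInvariant l M) (hl : l ≠ []) (hx : x ≤ l.getD (l.length - 1) 0) :
    AMInvariant (l ++ [x]) (fStep M x) := by
  have hmin : x ≤ mindex M := h.mindex_eq ▸ hx
  have hxd : x < M.d := hmin.trans_lt h.isRMatrix.mindex_lt
  rw [FMat.fStep_of_le_mindex hmin]
  refine ⟨h.isRMatrix.incLastCol hxd, ?_, ?_, ?_⟩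
  · rw [FMat.canonSeq_incLastCol hmin hxd, h.canonSeq_eq]
  · rw [ascents_concat hl, if_neg hx.not_gt, ← h.d_eq]
    rfl
  · rw [FMat.mindex_incLastCol hmin]
    simp

theorem concat_of_lt (h : AMInvariant l M) (hl : l ≠ []) (hx : l.getD (l.length - 1) 0 < x)
    (hx' : x = ascents l + 1) : AMInvariant (l ++ [x]) (fStep M x) := by
  obtain rfl : x = M.d := hx'.trans h.d_eq.symm
  rw [FMat.fStep_d h.isRMatrix]
  refine ⟨h.isRMatrix.addCorner, ?_, ?_, ?_⟩
  · rw [FMat.canonSeq_addCorner, h.canonSeq_eq]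
  · rw [ascents_concat hl, if_pos hx, ← h.d_eq]
    rfl
  · rw [FMat.mindex_addCorner]
    simp

end AMInvariant

theorem fAM_concat {l : List ℕ} (hl : l ≠ []) (x : ℕ) : fAM (l ++ [x]) = fStep (fAM l) x := by
  rw [fAM, fAM, tail_append_of_ne_nil hl, foldl_concat]

theorem amInvariant_fAM {a : List ℕ} (ha : SelfModified a) (hne : a ≠ []) :
    AMInvariant a (fAM a) := by
  induction a using List.reverseRecOn with
  | nil => exact absurd rfl hne
  | append_singleton l x ih =>
    rcases eq_or_ne l [] with rfl | hl
    · obtain rfl : x = 0 := ha.1.1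
      exact AMInvariant.singleton_zero
    · rw [fAM_concat hl]
      have h := ih ha.of_append hl
      rcases le_or_gt x (l.getD (l.length - 1) 0) with hx | hx
      · exact h.concat_of_le hl hx
      · exact h.concat_of_lt hl hx ((ha.concat_le_or_eq hl).resolve_left hx.not_ge)

theorem dual_eq_pan (a : List ℕ) (ha : SelfModified a) (hne : a ≠ []) :
    dualCanonSeq (fAM a) = pan a := by
  have h := amInvariant_fAM ha hne
  rw [← h.isRMatrix.pan_canonSeq, h.canonSeq_eq]
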